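/- arXiv:math/0308152 — 5 statements merged into one kernel-verified Lean document; each statement's English description precedes it below -/
import Mathlib

section
/- Let K = ℚ(ε) and let P = K[t^{α,p} : α ∈ {1,2}, p ∈ ℕ]. Then the operators L_{-1} and L_0 defined below satisfy the Virasoro commutation relation [L_{-1}, L_0] = −L_{-1} as K-linear endomorphisms of P. -/
/-!
Virasoro operators of the extended Toda hierarchy acting on the polynomial
algebra `P = K[t^{α,p}]`, `K = ℚ(ε)`.  Variables are indexed by
`(a, p) : Fin 2 × ℕ` where `a = 0` corresponds to `α = 1` and `a = 1` to `α = 2`.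
-/

open MvPolynomial

noncomputable section ExtendedToda

abbrev K : Type := RatFunc ℚ

abbrev P : Type := MvPolynomial (Fin 2 × ℕ) K

/-- The indeterminate `ε`. -/
def eps : K := RatFunc.X

/-- The coupling variable `t^{α,p}` (with `α = 1` encoded as `0`, `α = 2` as `1`). -/
def t (a : Fin 2) (p : ℕ) : P := X (a, p)

/-- The partial derivative `∂/∂t^{α,p}`. -/
def pd (a : Fin 2) (p : ℕ) (q : P) : P := pderiv (a, p) q

/-- `L_{-1} = Σ_{k≥1} Σ_α t^{α,k} ∂/∂t^{α,k−1} + ε^{−2} t^{1,0} t^{2,0}`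
(the sum over `k ≥ 1` is written with `k` shifted by one). -/
def Lneg1 (q : P) : P :=
  (∑ᶠ k : ℕ, (t 0 (k + 1) * pd 0 k q + t 1 (k + 1) * pd 1 k q))
    + eps⁻¹ ^ 2 • (t 0 0 * t 1 0 * q)

/-- `L_0 = Σ_{k≥1} k (t^{1,k} ∂_{1,k} + t^{2,k−1} ∂_{2,k−1}) + 2 Σ_{k≥1} t^{1,k} ∂_{2,k−1}
+ ε^{−2} (t^{1,0})²` (sums written with `k` shifted by one). -/
def L0 (q : P) : P :=
  (∑ᶠ k : ℕ, (((k : K) + 1) • (t 0 (k + 1) * pd 0 (k + 1) q + t 1 k * pd 1 k q)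
      + (2 : K) • (t 0 (k + 1) * pd 1 k q)))
    + eps⁻¹ ^ 2 • (t 0 0 * t 0 0 * q)

/-!
Both operators are a derivation of `P` plus multiplication by a polynomial:
`L_{-1} = D₋₁ + ε⁻² t^{1,0} t^{2,0}` and `L_0 = D₀ + ε⁻² (t^{1,0})²`, where `D₋₁` and `D₀` are
the derivations fixed by their values on the generators `t^{α,p}` (chain rule). For operators of
this shape `[D₁ + u, D₂ + v] = [D₁, D₂] + (D₁ v - D₂ u)`. Since a commutator of derivations is a
derivation, `[D₋₁, D₀] = -D₋₁` only has to be checked on generators, and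
`D₋₁ (ε⁻² (t^{1,0})²) - D₀ (ε⁻² t^{1,0} t^{2,0}) = -ε⁻² t^{1,0} t^{2,0}` is a direct computation.
-/

theorem finsum_nat_eq_finsum_succ {M : Type*} [AddCommMonoid M] {f : ℕ → M} (h₀ : f 0 = 0) :
    ∑ᶠ k, f k = ∑ᶠ k, f (k + 1) := by
  rw [← finsum_mem_univ, ← finsum_mem_range Nat.succ_injective]
  refine finsum_mem_inter_support_eq' f _ _ fun k hk => ?_
  obtain ⟨j, rfl⟩ := Nat.exists_eq_succ_of_ne_zero (show k ≠ 0 by rintro rfl; exact hk h₀)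
  simp

theorem finsum_prod_eq_finsum_sum {α β M : Type*} [Fintype α] [AddCommMonoid M]
    (g : α × β → M) (hg : g.HasFiniteSupport) : ∑ᶠ i, g i = ∑ᶠ b, ∑ a, g (a, b) := by
  rw [finsum_curry g hg, finsum_eq_sum_of_fintype]
  exact sum_finsum_comm _ _ fun a _ => hg.comp_of_injective (Prod.mk_right_injective a)

namespace MvPolynomial

variable {R σ : Type*} [CommSemiring R]

theorem support_pderiv_subset_vars (f : MvPolynomial σ R) :
    (Function.support fun i => pderiv i f) ⊆ f.vars := fun _ hi => by
  by_contra h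
  exact hi (pderiv_eq_zero_of_notMem_vars h)

theorem hasFiniteSupport_pderiv (f : MvPolynomial σ R) : (fun i => pderiv i f).HasFiniteSupport :=
  f.vars.finite_toSet.subset (support_pderiv_subset_vars f)

theorem derivation_apply_eq_finsum_pderiv
    (D : Derivation R (MvPolynomial σ R) (MvPolynomial σ R)) (f : MvPolynomial σ R) :
    D f = ∑ᶠ i, pderiv i f * D (X i) := by
  classical
  have hsupp : (Function.support fun i => pderiv i f * D (X i)) ⊆ f.vars :=
    (Function.support_mul_subset_left _ _).trans (support_pderiv_subset_vars f)
  rw [finsum_eq_sum_of_support_subset _ hsupp]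
  let D' : Derivation R (MvPolynomial σ R) (MvPolynomial σ R) :=
    ∑ i ∈ f.vars, D (X i) • pderiv i
  have hD' (g : MvPolynomial σ R) : D' g = ∑ i ∈ f.vars, pderiv i g * D (X i) := by
    rw [← Derivation.coeFnAddMonoidHom_apply, map_sum, Finset.sum_apply]
    simp [Derivation.smul_apply, mul_comm]
  rw [← hD']
  refine derivation_eq_of_forall_mem_vars fun j hj => ?_
  simp [hD', pderiv_X, Pi.single_apply, hj]

end MvPolynomial

theorem Derivation.add_mul_commutator_apply {R A : Type*} [CommRing R] [CommRing A] [Algebra R A]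
    (D₁ D₂ : Derivation R A A) (u v q : A) :
    D₁ (D₂ q + v * q) + u * (D₂ q + v * q) - (D₂ (D₁ q + u * q) + v * (D₁ q + u * q))
      = ⁅D₁, D₂⁆ q + (D₁ v - D₂ u) * q := by
  simp only [Derivation.commutator_apply, map_add, Derivation.leibniz, smul_eq_mul]
  ring

theorem hasFiniteSupport_pd (a : Fin 2) (q : P) : (fun k => pd a k q).HasFiniteSupport :=
  (hasFiniteSupport_pderiv q).comp_of_injective (g := Prod.mk a) (Prod.mk_right_injective a)

theorem derivation_apply_eq_finsum_pd (D : Derivation K P P) (q : P) :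
    D q = ∑ᶠ k : ℕ, (pd 0 k q * D (t 0 k) + pd 1 k q * D (t 1 k)) := by
  have hfin : (fun i => pderiv i q * D (X i)).HasFiniteSupport :=
    (hasFiniteSupport_pderiv q).mul_left _
  rw [derivation_apply_eq_finsum_pderiv, finsum_prod_eq_finsum_sum _ hfin]
  simp only [Fin.sum_univ_two, pd, t]

def Lneg1Der : Derivation K P P := mkDerivation K fun i => X (i.1, i.2 + 1)

def L0Der : Derivation K P P := mkDerivation K fun i =>
  if i.1 = 0 then (i.2 : K) • X i else ((i.2 : K) + 1) • X i + (2 : K) • X (0, i.2 + 1)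

theorem Lneg1Der_t (a : Fin 2) (p : ℕ) : Lneg1Der (t a p) = t a (p + 1) :=
  mkDerivation_X _ _ _

theorem L0Der_t_zero (p : ℕ) : L0Der (t 0 p) = (p : K) • t 0 p := by
  simp [L0Der, t]

theorem L0Der_t_one (p : ℕ) : L0Der (t 1 p) = ((p : K) + 1) • t 1 p + (2 : K) • t 0 (p + 1) := by
  simp [L0Der, t]

def Lneg1Pot : P := eps⁻¹ ^ 2 • (t 0 0 * t 1 0)

def L0Pot : P := eps⁻¹ ^ 2 • (t 0 0 * t 0 0)

theorem Lneg1_eq (q : P) : Lneg1 q = Lneg1Der q + Lneg1Pot * q := by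
  rw [Lneg1, derivation_apply_eq_finsum_pd Lneg1Der q, Lneg1Pot, smul_mul_assoc, mul_assoc]
  simp only [Lneg1Der_t, mul_comm]

theorem L0_eq (q : P) : L0 q = L0Der q + L0Pot * q := by
  rw [L0, derivation_apply_eq_finsum_pd L0Der q, L0Pot, smul_mul_assoc, mul_assoc]
  congr 1
  set g₀ : ℕ → P := fun k => (k : K) • (t 0 k * pd 0 k q)
  set g₁ : ℕ → P := fun k =>
    ((k : K) + 1) • (t 1 k * pd 1 k q) + (2 : K) • (t 0 (k + 1) * pd 1 k q)
  have hg₀ : g₀.HasFiniteSupport := by have := hasFiniteSupport_pd 0 q; fun_prop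
  have hg₁ : g₁.HasFiniteSupport := by have := hasFiniteSupport_pd 1 q; fun_prop
  have hg₀' : (fun k => g₀ (k + 1)).HasFiniteSupport :=
    hg₀.comp_of_injective (g := (· + 1)) Nat.succ_injective
  -- the `t 0` part of `L0` is indexed from `k + 1`; its missing `k = 0` term vanishes
  calc _ = ∑ᶠ k, (g₀ (k + 1) + g₁ k) := finsum_congr fun k => by
          simp only [g₀, g₁, smul_eq_C_mul]; push_cast; ring
    _ = ∑ᶠ k, (g₀ k + g₁ k) := by
          rw [finsum_add_distrib hg₀' hg₁, ← finsum_nat_eq_finsum_succ (by simp [g₀]),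
            finsum_add_distrib hg₀ hg₁]
    _ = _ := finsum_congr fun k => by
          simp only [g₀, g₁, L0Der_t_zero, L0Der_t_one, smul_eq_C_mul]; ring

theorem derivation_ext_t {D₁ D₂ : Derivation K P P} (h₀ : ∀ p, D₁ (t 0 p) = D₂ (t 0 p))
    (h₁ : ∀ p, D₁ (t 1 p) = D₂ (t 1 p)) : D₁ = D₂ :=
  derivation_ext (Prod.forall.2 (Fin.forall_fin_two.2 ⟨h₀, h₁⟩))

theorem lie_Lneg1Der_L0Der : ⁅Lneg1Der, L0Der⁆ = -Lneg1Der := by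
  refine derivation_ext_t (fun p => ?_) (fun p => ?_) <;>
  · simp only [Derivation.commutator_apply, Derivation.neg_apply, Lneg1Der_t, L0Der_t_zero,
      L0Der_t_one, map_add, Derivation.map_smul]
    push_cast
    simp only [smul_eq_C_mul, map_add, map_natCast, map_one, map_ofNat]
    ring

theorem Lneg1Der_L0Pot_sub_L0Der_Lneg1Pot : Lneg1Der L0Pot - L0Der Lneg1Pot = -Lneg1Pot := by
  rw [L0Pot, Lneg1Pot, Derivation.map_smul, Derivation.map_smul, ← smul_sub, ← smul_neg]
  congr 1
  simp only [Derivation.leibniz, Lneg1Der_t, L0Der_t_zero, L0Der_t_one, smul_eq_C_mul]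
  simp only [zero_add, Nat.cast_zero, map_zero, map_one, map_ofNat]
  ring

/-- The Virasoro commutation relation `[L_{-1}, L_0] = -L_{-1}` as operators on `P`. -/
theorem virasoro_comm_neg_one_zero (q : P) :
    Lneg1 (L0 q) - L0 (Lneg1 q) = -Lneg1 q := by
  simp only [Lneg1_eq, L0_eq]
  rw [Derivation.add_mul_commutator_apply, lie_Lneg1Der_L0Der, Lneg1Der_L0Pot_sub_L0Der_Lneg1Pot,
    Derivation.neg_apply]
  ring

end ExtendedToda
end

section
/- Let K = ℚ(ε) and let P = K[t^{α,p} : α ∈ {1,2}, p ∈ ℕ]. For every integer m ≥ 1, the operators L_{-1} and L_m defined below satisfy the Virasoro commutation relation [L_{-1}, L_m] = −(m+1)·L_{m−1} as K-linear endomorphisms of P. -/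
/-!
Virasoro operators of the extended Toda hierarchy acting on the polynomial
algebra `P = K[t^{α,p}]`, `K = ℚ(ε)`.  Variables are indexed by
`(a, p) : Fin 2 × ℕ` where `a = 0` corresponds to `α = 1` and `a = 1` to `α = 2`.
-/

open MvPolynomial

noncomputable section ExtendedToda

/-- The coefficients `α_m(k)`: `α_m(0) = m!` and
`α_m(k) = ((m+k)!/(k−1)!) Σ_{j=k}^{m+k} 1/j` for `k ≥ 1`. -/
def alphaC (m k : ℕ) : ℚ :=
  if k = 0 then (Nat.factorial m : ℚ)
  else ((Nat.factorial (m + k)) : ℚ) / ((Nat.factorial (k - 1)) : ℚ) * ∑ j ∈ Finset.Icc k (m + k), (1 : ℚ) / (j : ℚ)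

/-- For `m ≥ 1`, the operator
`L_m = ε² Σ_{k=1}^{m−1} k! (m−k)! ∂²/∂t^{2,k−1}∂t^{2,m−k−1}
 + Σ_{k≥1} ((m+k)!/(k−1)!) (t^{1,k} ∂_{1,m+k} + t^{2,k−1} ∂_{2,m+k−1})
 + 2 Σ_{k≥0} α_m(k) t^{1,k} ∂_{2,m+k−1}`
(the infinite sum over `k ≥ 1` is written with `k` shifted by one, the finite sum
over `1 ≤ k ≤ m−1` likewise, and `m+k−1` is written as `m−1+k`). -/
def Lpos (m : ℕ) (q : P) : P :=
  eps ^ 2 • (∑ k ∈ Finset.range (m - 1),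
      (((Nat.factorial (k + 1) * Nat.factorial (m - k - 1) : ℕ) : K) • pd 1 k (pd 1 (m - k - 2) q)))
  + (∑ᶠ k : ℕ, (((Nat.factorial (m + k + 1) : ℚ) / (Nat.factorial k : ℚ) : ℚ) : K) •
      (t 0 (k + 1) * pd 0 (m + k + 1) q + t 1 k * pd 1 (m + k) q))
  + (∑ᶠ k : ℕ, ((2 * alphaC m k : ℚ) : K) • (t 0 k * pd 1 (m - 1 + k) q))

/-- The family `L_0, L_1, L_2, …` of Virasoro operators. -/
def Lfam : ℕ → P → P
  | 0 => L0
  | (m + 1) => Lpos (m + 1)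

/-!
Write `L_{-1} = D + ε⁻² t^{1,0} t^{2,0}` and `L_m = ε² Q_m + V_m` (`shift`, `secondOrder m` and
`firstOrder m` below), where `D` and `V_m` are derivations of `P` and
`Q_m = Σ_{k+l=m} k! l! ∂_{2,k-1} ∂_{2,l-1}`. The locally finite sums in the definitions are
identified with derivations given by their values on the variables. A commutator of derivations is
a derivation, so `[D, V_m]` is determined on the variables, where it reduces to recursions for
`(m+k)!/(k-1)!` and for `α_m(k)`. `[D, Q_m]` follows from `[∂_{2,k}, D] = ∂_{2,k-1}`, and the
commutators with multiplication by `t^{1,0} t^{2,0}` from the Leibniz rule. The only term of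
`[D, V_m]` not of the form `-(m+1) V_{m-1}` comes from `α_m(0) = m!`, and it cancels against
`[ε⁻² t^{1,0} t^{2,0}, ε² Q_m]`; for `m = 1`, `[ε⁻² t^{1,0} t^{2,0}, V_1]` supplies the term
`ε⁻² (t^{1,0})²` of `L_0`.
-/

open Finset
open scoped Nat

/- `RatFunc`'s instance `Algebra R K⟮X⟯` (for every `R` with `Algebra R K[X]`) shadows the
canonical `ℕ`- and `ℤ`-algebra structures on `K`, which the `module` tactic needs. -/
attribute [local instance] Semiring.toNatAlgebra Ring.toIntAlgebra

section LocallyFiniteSum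

variable {ι R A M : Type*} [CommRing R] [CommRing A] [Algebra R A] [AddCommGroup M] [Module A M]
  [Module R M]

def Derivation.finsum (d : ι → Derivation R A M)
    (hd : ∀ a, (Function.support fun i ↦ d i a).Finite) : Derivation R A M :=
  Derivation.mk'
    { toFun a := ∑ᶠ i, d i a
      map_add' a b := by simp only [map_add]; exact finsum_add_distrib (hd a) (hd b)
      map_smul' r a := by simp only [map_smul]; exact (smul_finsum' r (hd a)).symm }
    fun a b ↦ by
      simp only [LinearMap.coe_mk, AddHom.coe_mk, Derivation.leibniz]
      have hab : (Function.support fun i ↦ a • d i b).Finite :=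
        (hd b).subset fun i hi h ↦ hi (by simp [h])
      have hba : (Function.support fun i ↦ b • d i a).Finite :=
        (hd a).subset fun i hi h ↦ hi (by simp [h])
      rw [finsum_add_distrib hab hba, smul_finsum' a (hd b), smul_finsum' b (hd a)]

end LocallyFiniteSum

theorem MvPolynomial.finsum_derivation_apply_eq {ι σ R M : Type*} [CommRing R] [AddCommGroup M]
    [Module (MvPolynomial σ R) M] [Module R M] (d : ι → Derivation R (MvPolynomial σ R) M)
    (D : Derivation R (MvPolynomial σ R) M) (hd : ∀ x, (Function.support fun i ↦ d i x).Finite)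
    (hX : ∀ s, ∑ᶠ i, d i (X s) = D (X s)) (x : MvPolynomial σ R) : ∑ᶠ i, d i x = D x :=
  DFunLike.congr_fun (derivation_ext (D₁ := Derivation.finsum d hd) hX) x

theorem MvPolynomial.exists_forall_le_pderiv_eq_zero {ι R : Type*} [CommSemiring R]
    (x : MvPolynomial (ι × ℕ) R) : ∃ N, ∀ a p, N ≤ p → pderiv (a, p) x = 0 := by
  refine ⟨x.vars.sup Prod.snd + 1, fun a p hp ↦ pderiv_eq_zero_of_notMem_vars fun h ↦ ?_⟩
  have := Finset.le_sup (f := Prod.snd) h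
  simp only at this
  omega

theorem Nat.finite_support_of_forall_le {M : Type*} [Zero M] {f : ℕ → M} (N : ℕ)
    (h : ∀ k, N ≤ k → f k = 0) : (Function.support f).Finite :=
  (Set.finite_lt_nat N).subset fun k hk ↦ by_contra fun hkN ↦ hk (h k (not_lt.mp hkN))

theorem finsum_ite_eq_add {M : Type*} [AddCommMonoid M] (s p : ℕ) (f : ℕ → M) :
    (∑ᶠ k, if p = s + k then f k else 0) = if s ≤ p then f (p - s) else 0 := by
  split_ifs with hsp
  · rw [finsum_eq_single _ (p - s) fun k hk ↦ if_neg (by omega), if_pos (by omega)]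
  · exact finsum_eq_zero_of_forall_eq_zero fun k ↦ if_neg (by omega)

theorem Derivation.apply_apply_mul {R A : Type*} [CommRing R] [CommRing A] [Algebra R A]
    (D₁ D₂ : Derivation R A A) (f x : A) :
    D₁ (D₂ (f * x)) = f * D₁ (D₂ x) + D₁ f * D₂ x + D₂ f * D₁ x + D₁ (D₂ f) * x := by
  simp only [Derivation.leibniz, map_add, smul_eq_mul]
  ring

namespace Virasoro

def coeffB (m k : ℕ) : ℚ := (m + k + 1)! / k !

theorem coeffB_zero_left (k : ℕ) : coeffB 0 k = k + 1 := by
  rw [coeffB, zero_add, Nat.factorial_succ, Nat.cast_mul,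
    mul_div_cancel_right₀ _ (Nat.cast_ne_zero.mpr k.factorial_ne_zero)]
  push_cast
  ring

theorem coeffB_succ_zero (M : ℕ) : coeffB (M + 1) 0 = (M + 2) * coeffB M 0 := by
  simp only [coeffB, Nat.factorial_succ (M + 1), add_zero, Nat.factorial_zero]
  push_cast
  ring

theorem coeffB_succ_succ (M j : ℕ) :
    coeffB (M + 1) (j + 1) = coeffB (M + 1) j + (M + 2) * coeffB M (j + 1) := by
  simp only [coeffB, show M + 1 + (j + 1) + 1 = M + j + 2 + 1 by ring,
    show M + 1 + j + 1 = M + j + 2 by ring, show M + (j + 1) + 1 = M + j + 2 by ring,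
    Nat.factorial_succ (M + j + 2), Nat.factorial_succ j]
  have := j.factorial_ne_zero
  push_cast
  field_simp
  ring

theorem alphaC_zero (m : ℕ) : alphaC m 0 = m ! := if_pos rfl

theorem alphaC_succ (m k : ℕ) :
    alphaC m (k + 1) = (m + k + 1)! / k ! * ∑ j ∈ Icc (k + 1) (m + k + 1), (1 : ℚ) / j := by
  rw [alphaC, if_neg k.succ_ne_zero, Nat.add_sub_cancel, ← add_assoc]

theorem alphaC_zero_succ (k : ℕ) : alphaC 0 (k + 1) = 1 := by
  rw [alphaC_succ, zero_add, Icc_self, sum_singleton, Nat.factorial_succ, Nat.cast_mul]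
  field_simp

theorem alphaC_succ_succ (M j : ℕ) :
    alphaC (M + 1) (j + 1) = alphaC (M + 1) j + (M + 2) * alphaC M (j + 1) := by
  rcases j with _ | i
  · simp only [alphaC_succ, alphaC_zero, add_zero, zero_add]
    rw [sum_Icc_succ_top (by omega), Nat.factorial_succ (M + 1)]
    push_cast
    field_simp
    ring
  · simp only [alphaC_succ, show M + 1 + (i + 1) + 1 = M + i + 2 + 1 by ring,
      show M + 1 + i + 1 = M + i + 2 by ring, show M + (i + 1) + 1 = M + i + 2 by ring]
    rw [sum_Icc_succ_top (by omega), Icc_eq_cons_Ioc (by omega : i + 1 ≤ M + i + 2), sum_cons,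
      ← Icc_add_one_left_eq_Ioc, Nat.factorial_succ (M + i + 2), Nat.factorial_succ i]
    have := i.factorial_ne_zero
    push_cast
    field_simp
    ring

def shift : Derivation K P P := mkDerivation K fun i ↦ X (i.1, i.2 + 1)

/-- `pdTwo k = ∂/∂t^{2,k-1}`, with `pdTwo 0 = 0`, so that `secondOrder m` below runs over the
whole antidiagonal `k + l = m`. -/
def pdTwo : ℕ → Derivation K P P
  | 0 => 0
  | k + 1 => pderiv (1, k)

def secondOrder (m : ℕ) : P →ₗ[K] P :=
  ∑ kl ∈ antidiagonal m, ((kl.1 ! * kl.2 ! : ℕ) : K) •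
    ((pdTwo kl.1 : P →ₗ[K] P) ∘ₗ (pdTwo kl.2 : P →ₗ[K] P))

/- The two sums in the first-order part of `L_m`, given by their values on the variables. The
indices are not truncated, so that for `m = 0` they give the first-order part of `L_0`. -/
def firstOrderB (m : ℕ) : Derivation K P P := mkDerivation K fun
  | (0, p) => if m < p then (coeffB m (p - (m + 1)) : K) • X (0, p - (m + 1) + 1) else 0
  | (1, p) => if m ≤ p then (coeffB m (p - m) : K) • X (1, p - m) else 0

def firstOrderA (m : ℕ) : Derivation K P P := mkDerivation K fun
  | (0, _) => 0
  | (1, p) => if m ≤ p + 1 then ((2 * alphaC m (p + 1 - m) : ℚ) : K) • X (0, p + 1 - m) else 0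

def firstOrder (m : ℕ) : Derivation K P P := firstOrderB m + firstOrderA m

@[simp]
theorem shift_X (a : Fin 2) (p : ℕ) : shift (X (a, p)) = X (a, p + 1) := mkDerivation_X _ _ _

@[simp]
theorem pdTwo_zero : pdTwo 0 = 0 := rfl

theorem pdTwo_X (k : ℕ) (a : Fin 2) (p : ℕ) :
    pdTwo k (X (a, p)) = if a = 1 ∧ p + 1 = k then 1 else 0 := by
  rcases k with _ | k
  · simp
  · simp [pdTwo, pderiv_X, Pi.single_apply]

theorem secondOrder_apply (m : ℕ) (x : P) : secondOrder m x
    = ∑ kl ∈ antidiagonal m, ((kl.1 ! * kl.2 ! : ℕ) : K) • pdTwo kl.1 (pdTwo kl.2 x) := by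
  simp [secondOrder]

theorem firstOrderB_X_zero_of_le {m p : ℕ} (h : p ≤ m) : firstOrderB m (X (0, p)) = 0 :=
  (mkDerivation_X _ _ _).trans (if_neg h.not_gt)

theorem firstOrderB_X_zero_of_eq {m p k : ℕ} (h : p = m + 1 + k) :
    firstOrderB m (X (0, p)) = (coeffB m k : K) • X (0, k + 1) :=
  (mkDerivation_X _ _ _).trans <|
    (if_pos (by omega)).trans (by rw [show p - (m + 1) = k by omega])

theorem firstOrderB_X_one_of_lt {m p : ℕ} (h : p < m) : firstOrderB m (X (1, p)) = 0 :=
  (mkDerivation_X _ _ _).trans (if_neg h.not_ge)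

theorem firstOrderB_X_one_of_eq {m p k : ℕ} (h : p = m + k) :
    firstOrderB m (X (1, p)) = (coeffB m k : K) • X (1, k) :=
  (mkDerivation_X _ _ _).trans <| (if_pos (by omega)).trans (by rw [show p - m = k by omega])

theorem firstOrderA_X_zero (m p : ℕ) : firstOrderA m (X (0, p)) = 0 := mkDerivation_X _ _ _

theorem firstOrderA_X_one_of_lt {m p : ℕ} (h : p + 1 < m) : firstOrderA m (X (1, p)) = 0 :=
  (mkDerivation_X _ _ _).trans (if_neg h.not_ge)

theorem firstOrderA_X_one_of_eq {m p k : ℕ} (h : p + 1 = m + k) :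
    firstOrderA m (X (1, p)) = ((2 * alphaC m k : ℚ) : K) • X (0, k) :=
  (mkDerivation_X _ _ _).trans <|
    (if_pos (by omega)).trans (by rw [show p + 1 - m = k by omega])

theorem finsum_apply_eq_of_X (d : ℕ → Derivation K P P) (D : Derivation K P P) (s : ℕ)
    (hd : ∀ x k, (∀ a p, s + k ≤ p → pderiv (a, p) x = 0) → d k x = 0)
    (hX : ∀ i, ∑ᶠ k, d k (X i) = D (X i)) (x : P) : ∑ᶠ k, d k x = D x := by
  refine finsum_derivation_apply_eq d D (fun y ↦ ?_) hX x
  obtain ⟨N, hN⟩ := exists_forall_le_pderiv_eq_zero y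
  exact Nat.finite_support_of_forall_le N fun k hk ↦ hd y k fun a p hp ↦ hN a p (by omega)

theorem finsum_shift (x : P) :
    ∑ᶠ k, (t 0 (k + 1) * pd 0 k x + t 1 (k + 1) * pd 1 k x) = shift x := by
  refine finsum_apply_eq_of_X
    (fun k ↦ (X (0, k + 1) : P) • pderiv (0, k) + (X (1, k + 1) : P) • pderiv (1, k)) shift 0
    (fun y k hy ↦ ?_) (fun ⟨a, p⟩ ↦ ?_) x
  · simp [hy 0 k (by omega), hy 1 k (by omega)]
  · fin_cases a <;> simpa [pderiv_X, Pi.single_apply] using finsum_ite_eq_add 0 p _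

theorem finsum_firstOrderB (m : ℕ) (x : P) :
    ∑ᶠ k, ((coeffB m k : ℚ) : K) • (t 0 (k + 1) * pd 0 (m + k + 1) x + t 1 k * pd 1 (m + k) x)
      = firstOrderB m x := by
  refine finsum_apply_eq_of_X (fun k ↦ (coeffB m k : K) •
      ((X (0, k + 1) : P) • pderiv (0, m + k + 1) + (X (1, k) : P) • pderiv (1, m + k)))
    (firstOrderB m) m (fun y k hy ↦ ?_) (fun ⟨a, p⟩ ↦ ?_) x
  · simp [hy 0 (m + k + 1) (by omega), hy 1 (m + k) (by omega)]
  · fin_cases a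
    · simpa [firstOrderB, pderiv_X, Pi.single_apply, add_right_comm m _ 1]
        using finsum_ite_eq_add (m + 1) p _
    · simpa [firstOrderB, pderiv_X, Pi.single_apply] using finsum_ite_eq_add m p _

theorem finsum_firstOrderA (M : ℕ) (x : P) : ∑ᶠ k, ((2 * alphaC (M + 1) k : ℚ) : K) •
    (t 0 k * pd 1 (M + 1 - 1 + k) x) = firstOrderA (M + 1) x := by
  refine finsum_apply_eq_of_X (fun k ↦ ((2 * alphaC (M + 1) k : ℚ) : K) •
      ((X (0, k) : P) • pderiv (1, M + k))) (firstOrderA (M + 1)) M (fun y k hy ↦ ?_)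
    (fun ⟨a, p⟩ ↦ ?_) x
  · simp [hy 1 (M + k) (by omega)]
  · fin_cases a
    · simp [firstOrderA, pderiv_X]
    · simpa [firstOrderA, pderiv_X, Pi.single_apply] using finsum_ite_eq_add M p _

theorem finsum_firstOrder_zero (x : P) :
    ∑ᶠ k : ℕ, (((k : K) + 1) • (t 0 (k + 1) * pd 0 (k + 1) x + t 1 k * pd 1 k x)
      + (2 : K) • (t 0 (k + 1) * pd 1 k x)) = firstOrder 0 x := by
  refine finsum_apply_eq_of_X (fun k ↦ ((k : K) + 1) •
      ((X (0, k + 1) : P) • pderiv (0, k + 1) + (X (1, k) : P) • pderiv (1, k))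
      + (2 : K) • ((X (0, k + 1) : P) • pderiv (1, k))) (firstOrder 0) 0 (fun y k hy ↦ ?_)
    (fun ⟨a, p⟩ ↦ ?_) x
  · simp [hy 0 (k + 1) (by omega), hy 1 k (by omega)]
  · fin_cases a
    · simpa [firstOrder, firstOrderB, firstOrderA, pderiv_X, Pi.single_apply,
        coeffB_zero_left, add_comm _ 1, Nat.one_le_iff_ne_zero, Nat.pos_iff_ne_zero]
        using finsum_ite_eq_add 1 p _
    · simpa [firstOrder, firstOrderB, firstOrderA, pderiv_X, Pi.single_apply,
        coeffB_zero_left, alphaC_zero_succ, ite_add_ite] using finsum_ite_eq_add 0 p _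

theorem sum_range_eq_secondOrder (m : ℕ) (x : P) :
    ∑ k ∈ range (m - 1), (((k + 1)! * (m - k - 1)! : ℕ) : K) • pd 1 k (pd 1 (m - k - 2) x)
      = secondOrder m x := by
  rw [secondOrder_apply, Nat.sum_antidiagonal_eq_sum_range_succ_mk]
  rcases m with _ | M
  · simp
  rw [sum_range_succ', sum_range_succ]
  simp only [Nat.sub_self, pdTwo_zero, Derivation.zero_apply, map_zero, smul_zero, add_zero]
  refine sum_congr (by simp) fun k hk ↦ ?_
  obtain ⟨j, hj⟩ := Nat.exists_eq_add_of_lt (mem_range.mp hk)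
  rw [show M + 1 - (k + 1) = j + 1 by omega, show M + 1 - k - 1 = j + 1 by omega,
    show M + 1 - k - 2 = j by omega]
  rfl

theorem Lneg1_apply (x : P) : Lneg1 x = shift x + eps⁻¹ ^ 2 • (t 0 0 * t 1 0 * x) := by
  rw [Lneg1, finsum_shift]

theorem Lpos_apply (M : ℕ) (x : P) :
    Lpos (M + 1) x = eps ^ 2 • secondOrder (M + 1) x + firstOrder (M + 1) x := by
  rw [firstOrder, Derivation.add_apply, ← finsum_firstOrderB, ← finsum_firstOrderA,
    ← sum_range_eq_secondOrder, ← add_assoc]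
  rfl

theorem Lfam_apply (m : ℕ) (x : P) : Lfam m x = eps ^ 2 • secondOrder m x + firstOrder m x
    + eps⁻¹ ^ 2 • if m = 0 then t 0 0 * t 0 0 * x else 0 := by
  rcases m with _ | M
  · rw [Lfam, L0, finsum_firstOrder_zero, ← sum_range_eq_secondOrder]
    simp
  · rw [Lfam, Lpos_apply, if_neg M.succ_ne_zero, smul_zero, add_zero]

theorem pdTwo_shift (k : ℕ) (x : P) :
    pdTwo k (shift x) = shift (pdTwo k x) + pdTwo (k - 1) x := by
  have h : ⁅pdTwo k, shift⁆ = pdTwo (k - 1) := by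
    refine derivation_ext fun ⟨a, p⟩ ↦ ?_
    have hk : p + 1 + 1 = k ↔ p + 1 = k - 1 := by omega
    simp [Derivation.commutator_apply, pdTwo_X, apply_ite, hk]
  rw [← h, Derivation.commutator_apply, add_sub_cancel]

theorem commutator_shift_secondOrder (M : ℕ) (x : P) :
    shift (secondOrder (M + 1) x) - secondOrder (M + 1) (shift x)
      = -((M : K) + 2) • secondOrder M x := by
  have hkl (k l : ℕ) : shift (pdTwo k (pdTwo l x)) - pdTwo k (pdTwo l (shift x))
      = -(pdTwo (k - 1) (pdTwo l x) + pdTwo k (pdTwo (l - 1) x)) := by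
    rw [pdTwo_shift, map_add, pdTwo_shift]
    abel
  simp only [secondOrder_apply, map_sum, Derivation.map_smul]
  rw [← sum_sub_distrib]
  simp only [← smul_sub, hkl, smul_neg, smul_add, sum_neg_distrib, sum_add_distrib]
  -- reindex both sums over `antidiagonal M`; the boundary terms vanish since `pdTwo 0 = 0`
  rw [Nat.sum_antidiagonal_succ, Nat.sum_antidiagonal_succ']
  simp only [Nat.zero_sub, Nat.add_sub_cancel, pdTwo_zero, Derivation.zero_apply, map_zero,
    smul_zero, zero_add, ← sum_add_distrib, smul_sum, ← sum_neg_distrib]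
  refine sum_congr rfl fun ⟨k, l⟩ hmem ↦ ?_
  rw [HasAntidiagonal.mem_antidiagonal] at hmem
  subst hmem
  dsimp only
  rw [← add_smul, ← neg_smul, smul_smul]
  congr 1
  push_cast [Nat.factorial_succ]
  ring

theorem lie_shift_firstOrderB (M : ℕ) :
    ⁅shift, firstOrderB (M + 1)⁆ = -((M : K) + 2) • firstOrderB M := by
  refine derivation_ext fun
    | (0, p) => ?_
    | (1, p) => ?_
  all_goals simp only [Derivation.commutator_apply, Derivation.smul_apply, shift_X]
  · rcases Nat.lt_or_ge M p with hp | hp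
    · obtain ⟨j, rfl⟩ := Nat.exists_eq_add_of_lt hp
      rw [firstOrderB_X_zero_of_eq (m := M) (k := j) (by omega)]
      rcases j with _ | j
      · rw [firstOrderB_X_zero_of_le (m := M + 1) (by omega),
          firstOrderB_X_zero_of_eq (m := M + 1) (k := 0) (by omega), coeffB_succ_zero,
          map_zero]
        push_cast
        module
      · rw [firstOrderB_X_zero_of_eq (m := M + 1) (k := j) (by omega),
          firstOrderB_X_zero_of_eq (m := M + 1) (k := j + 1) (by omega), coeffB_succ_succ,
          Derivation.map_smul, shift_X]
        push_cast
        module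
    · rw [firstOrderB_X_zero_of_le (by omega), firstOrderB_X_zero_of_le (by omega),
        firstOrderB_X_zero_of_le hp, map_zero, sub_zero, smul_zero]
  · rcases Nat.lt_or_ge p M with hp | hp
    · rw [firstOrderB_X_one_of_lt (by omega), firstOrderB_X_one_of_lt (by omega),
        firstOrderB_X_one_of_lt hp, map_zero, sub_zero, smul_zero]
    · obtain ⟨j, rfl⟩ := Nat.exists_eq_add_of_le hp
      rw [firstOrderB_X_one_of_eq (m := M) rfl]
      rcases j with _ | j
      · rw [firstOrderB_X_one_of_lt (m := M + 1) (by omega),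
          firstOrderB_X_one_of_eq (m := M + 1) (k := 0) (by omega), coeffB_succ_zero,
          map_zero]
        push_cast
        module
      · rw [firstOrderB_X_one_of_eq (m := M + 1) (k := j) (by omega),
          firstOrderB_X_one_of_eq (m := M + 1) (k := j + 1) (by omega), coeffB_succ_succ,
          Derivation.map_smul, shift_X]
        push_cast
        module

theorem lie_shift_firstOrderA (M : ℕ) : ⁅shift, firstOrderA (M + 1)⁆
    = -((M : K) + 2) • firstOrderA M + ((2 * M ! : ℕ) : K) • ((X (0, 0) : P) • pdTwo M) := by
  refine derivation_ext fun
    | (0, p) => ?_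
    | (1, p) => ?_
  all_goals simp only [Derivation.commutator_apply, Derivation.add_apply, Derivation.smul_apply,
    shift_X, pdTwo_X]
  · simp [firstOrderA_X_zero]
  · rcases lt_trichotomy (p + 1) M with hp | rfl | hp
    · rw [firstOrderA_X_one_of_lt (m := M + 1) (by omega),
        firstOrderA_X_one_of_lt (m := M + 1) (by omega), firstOrderA_X_one_of_lt hp]
      simp [hp.ne]
    · rw [firstOrderA_X_one_of_lt (m := p + 1 + 1) (by omega),
        firstOrderA_X_one_of_eq (m := p + 1 + 1) (k := 0) (by omega),
        firstOrderA_X_one_of_eq (m := p + 1) (k := 0) (by omega), alphaC_zero, alphaC_zero,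
        Nat.factorial_succ, map_zero]
      simp only [true_and, if_true, smul_eq_mul, mul_one]
      push_cast
      module
    · obtain ⟨j, hj⟩ := Nat.exists_eq_add_of_lt hp
      rw [firstOrderA_X_one_of_eq (m := M + 1) (k := j) (by omega),
        firstOrderA_X_one_of_eq (m := M + 1) (k := j + 1) (by omega),
        firstOrderA_X_one_of_eq (m := M) (k := j + 1) (by omega), alphaC_succ_succ,
        Derivation.map_smul, shift_X, if_neg (by omega)]
      push_cast
      module

theorem commutator_shift_firstOrder (M : ℕ) (x : P) :
    shift (firstOrder (M + 1) x) - firstOrder (M + 1) (shift x)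
      = -((M : K) + 2) • firstOrder M x + ((2 * M ! : ℕ) : K) • (t 0 0 * pdTwo M x) := by
  have hB := DFunLike.congr_fun (lie_shift_firstOrderB M) x
  have hA := DFunLike.congr_fun (lie_shift_firstOrderA M) x
  simp only [Derivation.commutator_apply, Derivation.add_apply, Derivation.smul_apply,
    smul_eq_mul] at hB hA
  simp only [firstOrder, Derivation.add_apply, map_add, t]
  linear_combination (norm := module) hB + hA

theorem pdTwo_t_mul_t (k : ℕ) : pdTwo k (t 0 0 * t 1 0) = if k = 1 then t 0 0 else 0 := by
  simp [t, Derivation.leibniz, pdTwo_X, eq_comm]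

theorem commutator_mul_secondOrder (M : ℕ) (x : P) :
    t 0 0 * t 1 0 * secondOrder (M + 1) x - secondOrder (M + 1) (t 0 0 * t 1 0 * x)
      = -((2 * M ! : ℕ) : K) • (t 0 0 * pdTwo M x) := by
  have hkl (k l : ℕ) :
      t 0 0 * t 1 0 * pdTwo k (pdTwo l x) - pdTwo k (pdTwo l (t 0 0 * t 1 0 * x))
        = -((if k = 1 then t 0 0 * pdTwo l x else 0)
          + (if l = 1 then t 0 0 * pdTwo k x else 0)) := by
    have h₀ : pdTwo k (t 0 0) = 0 := by simp [t, pdTwo_X]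
    rw [Derivation.apply_apply_mul, pdTwo_t_mul_t, pdTwo_t_mul_t]
    split_ifs <;> simp only [h₀, map_zero] <;> ring
  simp only [secondOrder_apply, mul_sum, mul_smul_comm]
  rw [← sum_sub_distrib]
  simp only [← smul_sub, hkl, smul_neg, smul_add, sum_neg_distrib, sum_add_distrib, smul_ite,
    smul_zero]
  rw [sum_eq_single_of_mem (1, M) (by simp [add_comm]) fun kl hmem hne ↦ if_neg ?_,
    sum_eq_single_of_mem (M, 1) (by simp) fun kl hmem hne ↦ if_neg ?_]
  · simp only [if_true]
    push_cast
    module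
  all_goals
    rw [HasAntidiagonal.mem_antidiagonal] at hmem
    contrapose! hne
    ext <;> simp <;> omega

theorem firstOrder_t_mul_t (M : ℕ) : firstOrder (M + 1) (t 0 0 * t 1 0)
    = if M = 0 then (2 : K) • (t 0 0 * t 0 0) else 0 := by
  have hB₀ : firstOrderB (M + 1) (t 0 0) = 0 := firstOrderB_X_zero_of_le (by omega)
  have hB₁ : firstOrderB (M + 1) (t 1 0) = 0 := firstOrderB_X_one_of_lt (by omega)
  have hA₀ : firstOrderA (M + 1) (t 0 0) = 0 := firstOrderA_X_zero _ _
  have hA₁ : firstOrderA (M + 1) (t 1 0) = if M = 0 then (2 : K) • t 0 0 else 0 := by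
    rcases M with _ | M
    · exact (firstOrderA_X_one_of_eq (k := 0) rfl).trans (by simp [alphaC_zero, t])
    · exact (firstOrderA_X_one_of_lt (by omega)).trans (if_neg M.succ_ne_zero).symm
  simp only [firstOrder, Derivation.add_apply, Derivation.leibniz, hB₀, hB₁, hA₀, hA₁, add_zero,
    zero_add, smul_eq_mul, mul_zero, mul_ite, mul_smul_comm]

theorem commutator_mul_firstOrder (M : ℕ) (x : P) :
    t 0 0 * t 1 0 * firstOrder (M + 1) x - firstOrder (M + 1) (t 0 0 * t 1 0 * x)
      = -((M : K) + 2) • if M = 0 then t 0 0 * t 0 0 * x else 0 := by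
  rw [Derivation.leibniz, smul_eq_mul, smul_eq_mul, sub_add_cancel_left, firstOrder_t_mul_t]
  rcases M with _ | M
  · rw [if_pos rfl, if_pos rfl, mul_smul_comm, mul_comm x]
    push_cast
    module
  · rw [if_neg M.succ_ne_zero, if_neg M.succ_ne_zero, mul_zero, neg_zero, smul_zero]

end Virasoro

open Virasoro in
/-- The Virasoro commutation relation `[L_{-1}, L_m] = −(m+1) L_{m−1}` for every `m ≥ 1`,
as operators on `P`. -/
theorem virasoro_comm_neg_one_m (m : ℕ) (hm : 1 ≤ m) (q : P) :
    Lneg1 (Lpos m q) - Lpos m (Lneg1 q) = (-((m : K) + 1)) • Lfam (m - 1) q := by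
  obtain ⟨M, rfl⟩ := Nat.exists_eq_add_of_le' hm
  have hε : eps ^ 2 * eps⁻¹ ^ 2 = 1 := by
    rw [← mul_pow, mul_inv_cancel₀ RatFunc.X_ne_zero, one_pow]
  simp only [Lneg1_apply, Lpos_apply, Lfam_apply, Nat.add_sub_cancel, map_add,
    Derivation.map_smul, map_smul, mul_add, mul_smul_comm, Nat.cast_add, Nat.cast_one]
  linear_combination (norm := module) eps ^ 2 • commutator_shift_secondOrder M q
    + commutator_shift_firstOrder M q + (eps ^ 2 * eps⁻¹ ^ 2) • commutator_mul_secondOrder M q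
    + eps⁻¹ ^ 2 • commutator_mul_firstOrder M q
    - hε • (((2 * M ! : ℕ) : K) • (t 0 0 * pdTwo M q))

end ExtendedToda
end

section
/- Let K = ℚ(ε) and let P = K[t^{α,p} : α ∈ {1,2}, p ∈ ℕ]. For every integer m ≥ 1, the operators L_0 and L_m defined below satisfy the Virasoro commutation relation [L_0, L_m] = −m·L_m as K-linear endomorphisms of P. -/
/-!
Virasoro operators of the extended Toda hierarchy acting on the polynomial
algebra `P = K[t^{α,p}]`, `K = ℚ(ε)`.  Variables are indexed by
`(a, p) : Fin 2 × ℕ` where `a = 0` corresponds to `α = 1` and `a = 1` to `α = 2`.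
-/

open MvPolynomial

noncomputable section ExtendedToda

/-!
Grade `P` by giving `t^{1,p}` weight `p` and `t^{2,p}` weight `p + 1`. Then `L_0` is the Euler
operator of this grading, plus the weight-zero derivation `N = 2 Σ t^{1,k} ∂/∂t^{2,k−1}`, plus
multiplication by `ε⁻² (t^{1,0})²`, while every term of `L_m` lowers the weight by `m`.
Multiplication by `(t^{1,0})²` commutes with `L_m`, which never differentiates in `t^{1,0}`, and
`N` commutes with each term of `L_m` once `t^{1,k} ∂/∂t^{1,m+k}` and `t^{2,k−1} ∂/∂t^{2,m+k−1}`,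
which carry the same coefficient, are grouped together. So `[L_0, L_m] = −m L_m`, whatever the
coefficients `α_m(k)` are. The infinite sums are handled as derivations of `P` defined by their
values on the variables, each of which only finitely many terms move.
-/

open Function

namespace MvPolynomial

variable {R σ ι : Type*} [CommRing R]

/-- The derivation `Σ_k δ k`, for a family that moves each variable in only finitely many
members (then `finsumDerivation_apply` holds; otherwise the value is junk). -/
def finsumDerivation (δ : ι → Derivation R (MvPolynomial σ R) (MvPolynomial σ R)) :
    Derivation R (MvPolynomial σ R) (MvPolynomial σ R) :=
  mkDerivation R fun i => ∑ᶠ k, δ k (X i)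

variable {δ : ι → Derivation R (MvPolynomial σ R) (MvPolynomial σ R)}

theorem support_derivation_apply_subset (f : MvPolynomial σ R) :
    Function.support (fun k => δ k f) ⊆
      ⋃ i ∈ (f.vars : Set σ), Function.support fun k => δ k (X i) := by
  intro k hk
  by_contra hnot
  simp only [Set.mem_iUnion, Function.mem_support, not_exists, not_not] at hnot
  exact hk (derivation_eq_zero_of_forall_mem_vars fun i hi => hnot i hi)

theorem hasFiniteSupport_derivation_apply (hδ : ∀ i, HasFiniteSupport fun k => δ k (X i))
    (f : MvPolynomial σ R) : HasFiniteSupport fun k => δ k f :=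
  (f.vars.finite_toSet.biUnion fun i _ => hδ i).subset (support_derivation_apply_subset f)

theorem finsumDerivation_apply (hδ : ∀ i, HasFiniteSupport fun k => δ k (X i))
    (f : MvPolynomial σ R) : finsumDerivation δ f = ∑ᶠ k, δ k f := by
  obtain ⟨s, hs⟩ : ∃ s : Finset ι,
      ↑s = ⋃ i ∈ (f.vars : Set σ), Function.support fun k => δ k (X i) :=
    ⟨_, (f.vars.finite_toSet.biUnion fun i _ => hδ i).coe_toFinset⟩
  have hsum : ∀ g, (∑ k ∈ s, δ k) g = ∑ k ∈ s, δ k g := fun g =>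
    (congrFun (map_sum Derivation.coeFnAddMonoidHom δ s) g).trans (Finset.sum_apply _ _ _)
  rw [finsum_eq_sum_of_support_subset _ (hs ▸ support_derivation_apply_subset f), ← hsum]
  refine derivation_eq_of_forall_mem_vars fun i hi => ?_
  rw [hsum, finsumDerivation, mkDerivation_X, finsum_eq_sum_of_support_subset]
  exact hs ▸ Set.subset_biUnion_of_mem (u := fun i => Function.support fun k => δ k (X i)) hi

theorem lie_finsumDerivation (hδ : ∀ i, HasFiniteSupport fun k => δ k (X i))
    {D : Derivation R (MvPolynomial σ R) (MvPolynomial σ R)} {c : R}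
    (h : ∀ k, ⁅D, δ k⁆ = c • δ k) : ⁅D, finsumDerivation δ⁆ = c • finsumDerivation δ := by
  refine Derivation.ext fun f => ?_
  have hf := hasFiniteSupport_derivation_apply hδ f
  have hDf : HasFiniteSupport fun k => D (δ k f) :=
    hf.subset fun k hk h0 => hk (by simp only [h0, map_zero])
  rw [Derivation.commutator_apply, Derivation.smul_apply, finsumDerivation_apply hδ,
    finsumDerivation_apply hδ, map_finsum D hf,
    ← finsum_sub_distrib hDf (hasFiniteSupport_derivation_apply hδ _), smul_finsum' c hf]
  simp only [← Derivation.commutator_apply, h, Derivation.smul_apply]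

theorem lie_pderiv_eq_neg [DecidableEq σ]
    {D E : Derivation R (MvPolynomial σ R) (MvPolynomial σ R)} {i : σ}
    (h : ∀ j, pderiv i (D (X j)) = E (X j)) : ⁅D, pderiv i⁆ = -E := by
  refine derivation_ext fun j => ?_
  have hconst : D (Pi.single (M := fun _ => MvPolynomial σ R) i 1 j) = 0 := by
    rw [Pi.single_apply]; split_ifs <;> simp
  rw [Derivation.commutator_apply, Derivation.neg_apply, pderiv_X, hconst, zero_sub, h]

end MvPolynomial

namespace Derivation

variable {R A : Type*} [CommRing R] [CommRing A] [Algebra R A]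

theorem lie_smul_right (D E : Derivation R A A) (a : A) : ⁅D, a • E⁆ = D a • E + a • ⁅D, E⁆ := by
  refine Derivation.ext fun b => ?_
  simp only [commutator_apply, smul_apply, add_apply, smul_eq_mul, leibniz]
  ring

theorem map_mul_of_map_eq_zero (D : Derivation R A A) {a : A} (ha : D a = 0) (b : A) :
    D (a * b) = a * D b := by
  rw [leibniz, ha, smul_zero, add_zero, smul_eq_mul]

end Derivation

theorem hasFiniteSupport_of_eq_zero_of_lt {M : Type*} [Zero M] {f : ℕ → M} (n : ℕ)
    (h : ∀ k, n < k → f k = 0) : HasFiniteSupport f :=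
  (Set.finite_Iic n).subset fun k hk => not_lt.mp fun hnk => hk (h k hnk)

open Nat

abbrev tDeriv (a : Fin 2) (p : ℕ) : Derivation K P P := pderiv (a, p)

def l0Term (k : ℕ) : Derivation K P P :=
  ((k : K) + 1) • (t 0 (k + 1) • tDeriv 0 (k + 1) + t 1 k • tDeriv 1 k)
    + (2 : K) • (t 0 (k + 1) • tDeriv 1 k)

/-- The two halves must stay together: the commutator of `L0Derivation` with each of them has
an extra term `∓ 2 t^{1,k+1} ∂/∂t^{2,m+k}`, and only the sum is homogeneous. -/
def lposTerm (m k : ℕ) : Derivation K P P :=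
  (((m + k + 1)! / k ! : ℚ) : K) • (t 0 (k + 1) • tDeriv 0 (m + k + 1) + t 1 k • tDeriv 1 (m + k))

def lposAlphaTerm (m k : ℕ) : Derivation K P P :=
  ((2 * alphaC m k : ℚ) : K) • (t 0 k • tDeriv 1 (m - 1 + k))

theorem hasFiniteSupport_l0Term (i : Fin 2 × ℕ) : HasFiniteSupport fun k => l0Term k (X i) :=
  hasFiniteSupport_of_eq_zero_of_lt i.2 fun k hk => by
    simp [l0Term, tDeriv, t, pderiv_X, Prod.ext_iff, show i.2 ≠ k by omega,
      show i.2 ≠ k + 1 by omega]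

theorem hasFiniteSupport_lposTerm (m : ℕ) (i : Fin 2 × ℕ) :
    HasFiniteSupport fun k => lposTerm m k (X i) :=
  hasFiniteSupport_of_eq_zero_of_lt i.2 fun k hk => by
    simp [lposTerm, tDeriv, t, pderiv_X, Prod.ext_iff, show i.2 ≠ m + k by omega,
      show i.2 ≠ m + k + 1 by omega]

theorem hasFiniteSupport_lposAlphaTerm (m : ℕ) (i : Fin 2 × ℕ) :
    HasFiniteSupport fun k => lposAlphaTerm m k (X i) :=
  hasFiniteSupport_of_eq_zero_of_lt i.2 fun k hk => by
    simp [lposAlphaTerm, tDeriv, t, pderiv_X, Prod.ext_iff, show i.2 ≠ m - 1 + k by omega]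

def L0Derivation : Derivation K P P := finsumDerivation l0Term

theorem L0Derivation_t_zero (p : ℕ) : L0Derivation (t 0 p) = (p : K) • t 0 p := by
  rw [L0Derivation, t, finsumDerivation, mkDerivation_X]
  rcases p with _ | p
  · simp [l0Term, tDeriv, pderiv_X]
  · rw [finsum_eq_single _ p fun k hk => by simp [l0Term, tDeriv, pderiv_X, hk.symm]]
    simp [l0Term, tDeriv, pderiv_X, t]

theorem L0Derivation_t_one (p : ℕ) :
    L0Derivation (t 1 p) = ((p : K) + 1) • t 1 p + (2 : K) • t 0 (p + 1) := by
  rw [L0Derivation, t, finsumDerivation, mkDerivation_X,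
    finsum_eq_single _ p fun k hk => by simp [l0Term, tDeriv, pderiv_X, Ne.symm hk]]
  simp [l0Term, tDeriv, pderiv_X, t]

theorem lie_L0Derivation_tDeriv_zero (p : ℕ) :
    ⁅L0Derivation, tDeriv 0 (p + 1)⁆
      = -(((p : K) + 1) • tDeriv 0 (p + 1) + (2 : K) • tDeriv 1 p) :=
  lie_pderiv_eq_neg fun
    | (0, r) => by
      change pderiv _ (L0Derivation (t 0 r)) = _
      rw [L0Derivation_t_zero]
      rcases eq_or_ne r (p + 1) with rfl | hr <;> simp [t, pderiv_X, *]
    | (1, r) => by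
      change pderiv _ (L0Derivation (t 1 r)) = _
      rw [L0Derivation_t_one]
      simp [t, pderiv_X, Pi.single_apply]

theorem lie_L0Derivation_tDeriv_one (p : ℕ) :
    ⁅L0Derivation, tDeriv 1 p⁆ = -(((p : K) + 1) • tDeriv 1 p) :=
  lie_pderiv_eq_neg fun
    | (0, r) => by
      change pderiv _ (L0Derivation (t 0 r)) = _
      rw [L0Derivation_t_zero]
      simp [t, pderiv_X]
    | (1, r) => by
      change pderiv _ (L0Derivation (t 1 r)) = _
      rw [L0Derivation_t_one]
      rcases eq_or_ne r p with rfl | hr <;> simp [t, pderiv_X, *]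

theorem L0Derivation_tDeriv_one (p : ℕ) (x : P) :
    L0Derivation (tDeriv 1 p x) = tDeriv 1 p (L0Derivation x) - ((p : K) + 1) • tDeriv 1 p x := by
  have h := DFunLike.congr_fun (lie_L0Derivation_tDeriv_one p) x
  rw [Derivation.commutator_apply, Derivation.neg_apply, Derivation.smul_apply] at h
  linear_combination h

theorem lie_L0Derivation_lposTerm (m k : ℕ) :
    ⁅L0Derivation, lposTerm m k⁆ = -(m : K) • lposTerm m k := by
  rw [lposTerm, lie_smul _ L0Derivation (_ : Derivation K P P), lie_add,
    Derivation.lie_smul_right, Derivation.lie_smul_right, L0Derivation_t_zero,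
    L0Derivation_t_one, lie_L0Derivation_tDeriv_zero, lie_L0Derivation_tDeriv_one]
  refine Derivation.ext fun f => ?_
  simp only [Derivation.add_apply, Derivation.smul_apply, Derivation.neg_apply, smul_eq_mul,
    MvPolynomial.smul_eq_C_mul, map_add, map_neg, map_one, map_natCast, Nat.cast_add]
  ring

theorem lie_L0Derivation_lposAlphaTerm {m : ℕ} (hm : 1 ≤ m) (k : ℕ) :
    ⁅L0Derivation, lposAlphaTerm m k⁆ = -(m : K) • lposAlphaTerm m k := by
  obtain ⟨n, rfl⟩ := Nat.exists_eq_add_of_le' hm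
  rw [lposAlphaTerm, lie_smul _ L0Derivation (_ : Derivation K P P), Derivation.lie_smul_right,
    L0Derivation_t_zero, Nat.add_sub_cancel, lie_L0Derivation_tDeriv_one]
  refine Derivation.ext fun f => ?_
  simp only [Derivation.add_apply, Derivation.smul_apply, Derivation.neg_apply, smul_eq_mul,
    MvPolynomial.smul_eq_C_mul, map_add, map_neg, map_one, map_natCast, Nat.cast_add]
  ring

def LposDerivation (m : ℕ) : Derivation K P P :=
  finsumDerivation (lposTerm m) + finsumDerivation (lposAlphaTerm m)

theorem lie_L0Derivation_LposDerivation {m : ℕ} (hm : 1 ≤ m) :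
    ⁅L0Derivation, LposDerivation m⁆ = -(m : K) • LposDerivation m := by
  rw [LposDerivation, lie_add L0Derivation, smul_add,
    lie_finsumDerivation (hasFiniteSupport_lposTerm m) (lie_L0Derivation_lposTerm m),
    lie_finsumDerivation (hasFiniteSupport_lposAlphaTerm m) (lie_L0Derivation_lposAlphaTerm hm)]

theorem L0Derivation_LposDerivation_sub {m : ℕ} (hm : 1 ≤ m) (x : P) :
    L0Derivation (LposDerivation m x) - LposDerivation m (L0Derivation x)
      = -(m : K) • LposDerivation m x := by
  rw [← Derivation.commutator_apply, lie_L0Derivation_LposDerivation hm, Derivation.smul_apply]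

def LposSecondOrder (m : ℕ) : P →ₗ[K] P :=
  eps ^ 2 • ∑ k ∈ Finset.range (m - 1), (((k + 1)! * (m - k - 1)! : ℕ) : K) •
    ((tDeriv 1 k : P →ₗ[K] P) ∘ₗ (tDeriv 1 (m - k - 2) : P →ₗ[K] P))

theorem LposSecondOrder_apply (m : ℕ) (x : P) :
    LposSecondOrder m x = eps ^ 2 • ∑ k ∈ Finset.range (m - 1),
      (((k + 1)! * (m - k - 1)! : ℕ) : K) • tDeriv 1 k (tDeriv 1 (m - k - 2) x) := by
  simp [LposSecondOrder, LinearMap.sum_apply]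

theorem L0Derivation_LposSecondOrder_sub (m : ℕ) (x : P) :
    L0Derivation (LposSecondOrder m x) - LposSecondOrder m (L0Derivation x)
      = -(m : K) • LposSecondOrder m x := by
  rw [LposSecondOrder_apply, LposSecondOrder_apply, Derivation.map_smul,
    map_sum (L0Derivation : Derivation K P P), ← smul_sub, ← Finset.sum_sub_distrib,
    smul_comm (-(m : K)), Finset.smul_sum (r := -(m : K))]
  congr 1
  refine Finset.sum_congr rfl fun k hk => ?_
  obtain ⟨j, rfl⟩ : ∃ j, m = k + j + 2 := ⟨m - k - 2, by rw [Finset.mem_range] at hk; omega⟩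
  rw [show k + j + 2 - k - 2 = j by omega, Derivation.map_smul, L0Derivation_tDeriv_one,
    L0Derivation_tDeriv_one, map_sub, Derivation.map_smul]
  generalize (((k + 1)! * (k + j + 2 - k - 1)! : ℕ) : K) = c
  simp only [MvPolynomial.smul_eq_C_mul, map_add, map_neg, map_one, map_natCast, Nat.cast_add]
  ring

theorem map_t00_sq_mul {D : Derivation K P P} (hD : D (t 0 0) = 0) (x : P) :
    D (t 0 0 * t 0 0 * x) = t 0 0 * t 0 0 * D x := by
  rw [D.map_mul_of_map_eq_zero (by rw [D.map_mul_of_map_eq_zero hD, hD, mul_zero])]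

theorem LposDerivation_t00 (m : ℕ) : LposDerivation m (t 0 0) = 0 := by
  simp [LposDerivation, finsumDerivation, t, lposTerm, lposAlphaTerm, pderiv_X]

theorem LposSecondOrder_smul_t00_sq_mul (m : ℕ) (c : K) (x : P) :
    LposSecondOrder m (c • (t 0 0 * t 0 0 * x)) = c • (t 0 0 * t 0 0 * LposSecondOrder m x) := by
  have h : ∀ p y, tDeriv 1 p (t 0 0 * t 0 0 * y) = t 0 0 * t 0 0 * tDeriv 1 p y := fun p =>
    map_t00_sq_mul (by simp [t, pderiv_X])
  simp only [map_smul, LposSecondOrder_apply, h, Finset.mul_sum, mul_smul_comm]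

theorem L0_apply (q : P) : L0 q = L0Derivation q + eps⁻¹ ^ 2 • (t 0 0 * t 0 0 * q) := by
  rw [L0, L0Derivation, finsumDerivation_apply hasFiniteSupport_l0Term]
  rfl

theorem Lpos_apply (m : ℕ) (q : P) : Lpos m q = LposSecondOrder m q + LposDerivation m q := by
  rw [Lpos, LposSecondOrder_apply, LposDerivation, Derivation.add_apply,
    finsumDerivation_apply (hasFiniteSupport_lposTerm m),
    finsumDerivation_apply (hasFiniteSupport_lposAlphaTerm m), add_assoc]
  rfl

/-- The Virasoro commutation relation `[L_0, L_m] = −m L_m` for every `m ≥ 1`,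
as operators on `P`. -/
theorem virasoro_comm_zero_m (m : ℕ) (hm : 1 ≤ m) (q : P) :
    L0 (Lpos m q) - Lpos m (L0 q) = (-(m : K)) • Lpos m q := by
  simp only [L0_apply, Lpos_apply, map_add, Derivation.map_smul, LposSecondOrder_smul_t00_sq_mul,
    map_t00_sq_mul (LposDerivation_t00 m)]
  rw [smul_add, ← L0Derivation_LposSecondOrder_sub, ← L0Derivation_LposDerivation_sub hm]
  simp only [mul_add, smul_add]
  abel

end ExtendedToda
end

section
/- For every integer p ≥ 1 and all real (v,u): ∂²θ_{2,p}/∂u² = e^u·∂θ_{2,p−1}/∂v, ∂²θ_{2,p}/∂u∂v = ∂θ_{2,p−1}/∂u, and ∂²θ_{2,p}/∂v² = ∂θ_{2,p−1}/∂v, i.e. the functions θ_{2,p} satisfy the deformed flatness recursion ∂²θ_{2,p}/∂w^β∂w^γ = c^ξ_{βγ}·∂θ_{2,p−1}/∂w^ξ determined by the Frobenius potential F = (1/2)v²u + e^u. -/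
/-!
The dispersionless Hamiltonian densities `θ_{α,p}(v,u)` of the extended Toda
hierarchy and their partial derivatives.
-/

noncomputable section Toda

/-- The harmonic number `H_m = Σ_{j=1}^m 1/j`. -/
def harm (m : ℕ) : ℝ := ∑ j ∈ Finset.Icc 1 m, (1 : ℝ) / (j : ℝ)

/-- `θ_{2,p}(v,u) = Σ_{2m ≤ p+1} e^{mu} v^{p+1−2m} / ((m!)² (p+1−2m)!)`. -/
def theta2 (p : ℕ) (v u : ℝ) : ℝ :=
  ∑ m ∈ Finset.range ((p + 1) / 2 + 1),
    Real.exp (m * u) * v ^ (p + 1 - 2 * m) /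
      ((Nat.factorial m : ℝ) ^ 2 * (Nat.factorial (p + 1 - 2 * m) : ℝ))

/-- `θ_{1,p}(v,u) = −2 Σ_{2m ≤ p} (H_m − u/2) e^{mu} v^{p−2m} / ((m!)² (p−2m)!)`. -/
def theta1 (p : ℕ) (v u : ℝ) : ℝ :=
  -2 * ∑ m ∈ Finset.range (p / 2 + 1),
    (harm m - u / 2) * Real.exp (m * u) * v ^ (p - 2 * m) /
      ((Nat.factorial m : ℝ) ^ 2 * (Nat.factorial (p - 2 * m) : ℝ))

/-- Partial derivative in the first variable `v`. -/
def dv (f : ℝ → ℝ → ℝ) (v u : ℝ) : ℝ := deriv (fun v' => f v' u) v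

/-- Partial derivative in the second variable `u`. -/
def du (f : ℝ → ℝ → ℝ) (v u : ℝ) : ℝ := deriv (fun u' => f v u') u

/-!
`θ_{2,p} = S_{p+1}`, where `S_n = Σ_{2m+k=n} e^{mu} vᵏ / ((m!)² k!)` is the coefficient of `zⁿ`
in `e^{zv} I₀(2z e^{u/2})`. Termwise, `∂_v` lowers the power of `v`, so `∂_v S_{n+1} = S_n`,
while `∂_u²` multiplies the `m`-th monomial by `m²`, turning `e^{mu}/(m!)²` into
`e^u e^{(m-1)u}/((m-1)!)²`, so `∂_u² S_{n+2} = e^u S_n`. The three identities follow from these two.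
-/

open Finset Nat

lemma dv_sum {ι : Type*} (s : Finset ι) (f : ι → ℝ → ℝ → ℝ) (v u : ℝ)
    (hf : ∀ i ∈ s, Differentiable ℝ fun v => f i v u) :
    dv (fun v u => ∑ i ∈ s, f i v u) v u = ∑ i ∈ s, dv (f i) v u :=
  deriv_fun_sum fun i hi => (hf i hi).differentiableAt

lemma du_sum {ι : Type*} (s : Finset ι) (f : ι → ℝ → ℝ → ℝ) (v u : ℝ)
    (hf : ∀ i ∈ s, Differentiable ℝ (f i v)) :
    du (fun v u => ∑ i ∈ s, f i v u) v u = ∑ i ∈ s, du (f i) v u :=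
  deriv_fun_sum fun i hi => (hf i hi).differentiableAt

lemma du_const_mul (c : ℝ) (f : ℝ → ℝ → ℝ) :
    du (fun v u => c * f v u) = fun v u => c * du f v u :=
  funext fun _ => deriv_const_mul_field' c

def todaMonomial (m n : ℕ) (v u : ℝ) : ℝ :=
  Real.exp (m * u) * v ^ n / ((m ! : ℝ) ^ 2 * (n ! : ℝ))

def todaSum (n : ℕ) (v u : ℝ) : ℝ :=
  ∑ m ∈ range (n / 2 + 1), todaMonomial m (n - 2 * m) v u

lemma theta2_eq_todaSum (p : ℕ) : theta2 p = todaSum (p + 1) := rfl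

lemma differentiable_todaMonomial_v (m n : ℕ) (u : ℝ) :
    Differentiable ℝ fun v => todaMonomial m n v u := by
  unfold todaMonomial; fun_prop

lemma differentiable_todaMonomial_u (m n : ℕ) (v : ℝ) :
    Differentiable ℝ (todaMonomial m n v) := by
  unfold todaMonomial; fun_prop

lemma dv_todaMonomial_succ (m n : ℕ) : dv (todaMonomial m (n + 1)) = todaMonomial m n := by
  funext v u
  simp only [dv, todaMonomial, deriv_div_const, deriv_const_mul_field', deriv_pow_field,
    Nat.add_sub_cancel, factorial_succ]
  push_cast
  field_simp

lemma dv_todaMonomial_zero (m : ℕ) : dv (todaMonomial m 0) = 0 := by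
  funext v u
  simp [dv, todaMonomial]

lemma du_todaMonomial (m n : ℕ) :
    du (todaMonomial m n) = fun v u => m * todaMonomial m n v u := by
  funext v u
  simp only [du, todaMonomial, deriv_div_const, deriv_mul_const_field]
  rw [deriv_exp (by fun_prop), deriv_const_mul_field', deriv_id'']
  ring

lemma du_du_todaMonomial (m n : ℕ) :
    du (du (todaMonomial m n)) = fun v u => m ^ 2 * todaMonomial m n v u := by
  rw [du_todaMonomial, du_const_mul, du_todaMonomial]
  funext v u
  ring

lemma succ_sq_mul_todaMonomial_succ (m n : ℕ) (v u : ℝ) :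
    ((m + 1 : ℕ) : ℝ) ^ 2 * todaMonomial (m + 1) n v u = Real.exp u * todaMonomial m n v u := by
  simp only [todaMonomial, factorial_succ]
  push_cast
  rw [add_mul, one_mul, Real.exp_add]
  field_simp

lemma dv_todaSum_succ (n : ℕ) : dv (todaSum (n + 1)) = todaSum n := by
  funext v u
  refine (dv_sum (range _) (fun m => todaMonomial m (n + 1 - 2 * m)) v u
    fun m _ => differentiable_todaMonomial_v m _ u).trans ?_
  rw [← sum_subset (range_subset_range.2 (by omega : n / 2 + 1 ≤ (n + 1) / 2 + 1))]
  · refine sum_congr rfl fun m hm => ?_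
    have hm : 2 * m ≤ n := by rw [mem_range] at hm; omega
    rw [show n + 1 - 2 * m = n - 2 * m + 1 by omega, dv_todaMonomial_succ]
  · intro m hm hm'
    rw [mem_range] at hm hm'
    rw [show n + 1 - 2 * m = 0 by omega, dv_todaMonomial_zero, Pi.zero_apply, Pi.zero_apply]

lemma du_du_todaSum_add_two (n : ℕ) (v u : ℝ) :
    du (du (todaSum (n + 2))) v u = Real.exp u * todaSum n v u := by
  set N := (n + 2) / 2 + 1
  have hdu : du (todaSum (n + 2)) =
      fun v u => ∑ m ∈ range N, du (todaMonomial m (n + 2 - 2 * m)) v u :=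
    funext₂ fun v u => du_sum _ _ v u fun m _ => differentiable_todaMonomial_u m _ v
  have hdiff (m k : ℕ) : Differentiable ℝ (du (todaMonomial m k) v) := by
    rw [du_todaMonomial]
    exact (differentiable_todaMonomial_u m k v).const_mul _
  calc du (du (todaSum (n + 2))) v u
      = ∑ m ∈ range N, du (du (todaMonomial m (n + 2 - 2 * m))) v u := by
        rw [hdu]; exact du_sum _ _ v u fun m _ => hdiff m _
    _ = ∑ m ∈ range (n / 2 + 1), ((m + 1 : ℕ) : ℝ) ^ 2 * todaMonomial (m + 1) (n - 2 * m) v u := by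
        rw [show N = n / 2 + 1 + 1 by omega, sum_range_succ']
        simp only [du_du_todaMonomial, show ∀ m, n + 2 - 2 * (m + 1) = n - 2 * m by omega,
          Nat.cast_zero, zero_pow two_ne_zero, zero_mul, add_zero]
    _ = Real.exp u * todaSum n v u := by
        simp only [succ_sq_mul_todaMonomial_succ, todaSum, mul_sum]

/-- The deformed flatness recursion for the functions `θ_{2,p}`, `p ≥ 1`:
`∂²θ_{2,p}/∂u² = e^u ∂θ_{2,p−1}/∂v`, `∂²θ_{2,p}/∂u∂v = ∂θ_{2,p−1}/∂u`,
`∂²θ_{2,p}/∂v² = ∂θ_{2,p−1}/∂v`. -/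
theorem theta2_deformed_flatness (p : ℕ) (hp : 1 ≤ p) (v u : ℝ) :
    du (du (theta2 p)) v u = Real.exp u * dv (theta2 (p - 1)) v u ∧
    du (dv (theta2 p)) v u = du (theta2 (p - 1)) v u ∧
    dv (dv (theta2 p)) v u = dv (theta2 (p - 1)) v u := by
  obtain ⟨q, rfl⟩ := Nat.exists_eq_add_of_le' hp
  simp only [Nat.add_sub_cancel, theta2_eq_todaSum, dv_todaSum_succ, and_self, and_true]
  exact du_du_todaSum_add_two q v u

end Toda
end

section
/- Let A = ℝ[v_0, v_1, v_2, …; u_0, u_1, u_2, …; E] be the polynomial ring in countably many commuting variables, let ∂ be the unique ℝ-derivation of A with ∂v_m = v_{m+1}, ∂u_m = u_{m+1}, ∂E = u_1·E, and let D and D' be the unique ℝ-derivations of A with D v_m = ∂^m(u_1·E), D u_m = v_{m+1}, D E = v_1·E, and D' v_m = ∂^m(v_0·v_1 + u_0·u_1·E), D' u_m = ∂^m(v_0·u_1 + u_0·v_1), D' E = (v_0·u_1 + u_0·v_1)·E. Then D and D' commute: D∘D' = D'∘D on A. -/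
/-!
Commutativity of the dispersionless `t^{2,0}`- and `t^{1,1}`-flows of the extended Toda
hierarchy as evolutionary derivations of the jet polynomial ring
`A = ℝ[v_0, v_1, …; u_0, u_1, …; E]` (`E` represents `e^u`).
-/

open MvPolynomial

noncomputable section TodaJets

/-- Variable index: `Sum.inl m ↦ v_m`, `Sum.inr (Sum.inl m) ↦ u_m`,
`Sum.inr (Sum.inr ()) ↦ E`. -/
abbrev JetVar : Type := ℕ ⊕ ℕ ⊕ Unit

/-- The jet polynomial ring `A`. -/
abbrev A : Type := MvPolynomial JetVar ℝ

/-- The variable `v_m`. -/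
def V (m : ℕ) : A := X (Sum.inl m)

/-- The variable `u_m`. -/
def U (m : ℕ) : A := X (Sum.inr (Sum.inl m))

/-- The variable `E` (representing `e^u`). -/
def E : A := X (Sum.inr (Sum.inr ()))

/-- The total `x`-derivative `∂`: `∂v_m = v_{m+1}`, `∂u_m = u_{m+1}`, `∂E = u_1 E`. -/
def dx : Derivation ℝ A A :=
  mkDerivation ℝ fun i =>
    match i with
    | Sum.inl m => V (m + 1)
    | Sum.inr (Sum.inl m) => U (m + 1)
    | Sum.inr (Sum.inr _) => U 1 * E

/-- The evolutionary derivation `D` of the dispersionless `t^{2,0}`-flow: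
`D v_m = ∂^m(u_1 E)`, `D u_m = v_{m+1}`, `D E = v_1 E`. -/
def D : Derivation ℝ A A :=
  mkDerivation ℝ fun i =>
    match i with
    | Sum.inl m => (⇑dx)^[m] (U 1 * E)
    | Sum.inr (Sum.inl m) => V (m + 1)
    | Sum.inr (Sum.inr _) => V 1 * E

/-- The evolutionary derivation `D'` of the dispersionless `t^{1,1}`-flow:
`D' v_m = ∂^m(v_0 v_1 + u_0 u_1 E)`, `D' u_m = ∂^m(v_0 u_1 + u_0 v_1)`,
`D' E = (v_0 u_1 + u_0 v_1) E`. -/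
def D' : Derivation ℝ A A :=
  mkDerivation ℝ fun i =>
    match i with
    | Sum.inl m => (⇑dx)^[m] (V 0 * V 1 + U 0 * U 1 * E)
    | Sum.inr (Sum.inl m) => (⇑dx)^[m] (V 0 * U 1 + U 0 * V 1)
    | Sum.inr (Sum.inr _) => (V 0 * U 1 + U 0 * V 1) * E


@[simp] lemma dx_V (m : ℕ) : dx (V m) = V (m + 1) := by
  simp [dx, V, mkDerivation_X]

@[simp] lemma dx_U (m : ℕ) : dx (U m) = U (m + 1) := by
  simp [dx, U, mkDerivation_X]

@[simp] lemma dx_E : dx E = U 1 * E := by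
  simp [dx, E, mkDerivation_X]

@[simp] lemma D_V (m : ℕ) : D (V m) = (⇑dx)^[m] (U 1 * E) := by
  simp [D, V, mkDerivation_X]

@[simp] lemma D_U (m : ℕ) : D (U m) = V (m + 1) := by
  simp [D, U, mkDerivation_X]

@[simp] lemma D_E : D E = V 1 * E := by
  simp [D, E, mkDerivation_X]

@[simp] lemma D'_V (m : ℕ) : D' (V m) = (⇑dx)^[m] (V 0 * V 1 + U 0 * U 1 * E) := by
  simp [D', V, mkDerivation_X]

@[simp] lemma D'_U (m : ℕ) : D' (U m) = (⇑dx)^[m] (V 0 * U 1 + U 0 * V 1) := by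
  simp [D', U, mkDerivation_X]

@[simp] lemma D'_E : D' E = (V 0 * U 1 + U 0 * V 1) * E := by
  simp [D', E, mkDerivation_X]

lemma dx_D_comm : ∀ a : A, dx (D a) = D (dx a) := by
  have h : (⁅dx, D⁆ : Derivation ℝ A A) = 0 := by
    apply derivation_ext
    rintro (m | m | _)
    · show (⁅dx, D⁆ : Derivation ℝ A A) (V m) = 0
      simp [Derivation.commutator_apply, ← Function.iterate_succ_apply' (⇑dx)]
    · show (⁅dx, D⁆ : Derivation ℝ A A) (U m) = 0
      simp [Derivation.commutator_apply]
    · show (⁅dx, D⁆ : Derivation ℝ A A) E = 0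
      simp [Derivation.commutator_apply]; ring
  intro a
  have := congrArg (fun d : Derivation ℝ A A => d a) h
  simpa [Derivation.commutator_apply, sub_eq_zero] using this

lemma dx_D'_comm : ∀ a : A, dx (D' a) = D' (dx a) := by
  have h : (⁅dx, D'⁆ : Derivation ℝ A A) = 0 := by
    apply derivation_ext
    rintro (m | m | _)
    · show (⁅dx, D'⁆ : Derivation ℝ A A) (V m) = 0
      simp [Derivation.commutator_apply, ← Function.iterate_succ_apply' (⇑dx)]
    · show (⁅dx, D'⁆ : Derivation ℝ A A) (U m) = 0
      simp only [Derivation.commutator_apply, dx_U, D'_U,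
        ← Function.iterate_succ_apply' (⇑dx), sub_self]
    · show (⁅dx, D'⁆ : Derivation ℝ A A) E = 0
      simp [Derivation.commutator_apply]; ring
  intro a
  have := congrArg (fun d : Derivation ℝ A A => d a) h
  simpa [Derivation.commutator_apply, sub_eq_zero] using this

lemma D_iterate (m : ℕ) (a : A) : D ((⇑dx)^[m] a) = (⇑dx)^[m] (D a) :=
  (Function.Commute.iterate_right (fun b => (dx_D_comm b).symm) m) a

lemma D'_iterate (m : ℕ) (a : A) : D' ((⇑dx)^[m] a) = (⇑dx)^[m] (D' a) :=
  (Function.Commute.iterate_right (fun b => (dx_D'_comm b).symm) m) a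

lemma key_PQ : D (V 0 * V 1 + U 0 * U 1 * E) = D' (U 1 * E) := by
  simp only [map_add, Derivation.leibniz, smul_eq_mul, D_V, D_U, D_E, D'_U, D'_E,
    Function.iterate_one, Function.iterate_zero, id_eq, map_add, Derivation.leibniz,
    dx_V, dx_U, dx_E]
  ring

lemma key_RP : D (V 0 * U 1 + U 0 * V 1) = dx (V 0 * V 1 + U 0 * U 1 * E) := by
  simp only [map_add, Derivation.leibniz, smul_eq_mul, D_V, D_U, D_E,
    Function.iterate_one, Function.iterate_zero, id_eq, dx_V, dx_U, dx_E]
  ring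

/-- The dispersionless `t^{2,0}`- and `t^{1,1}`-flows of the extended Toda hierarchy
commute: `D ∘ D' = D' ∘ D` on `A`. -/
theorem dispersionless_flows_commute (a : A) : D (D' a) = D' (D a) := by
  have h : (⁅D, D'⁆ : Derivation ℝ A A) = 0 := by
    apply derivation_ext
    rintro (m | m | _)
    · show (⁅D, D'⁆ : Derivation ℝ A A) (V m) = 0
      rw [Derivation.commutator_apply, D_V, D'_V, D_iterate, D'_iterate, key_PQ, sub_self]
    · show (⁅D, D'⁆ : Derivation ℝ A A) (U m) = 0
      rw [Derivation.commutator_apply, D_U, D'_U, D_iterate, key_RP, D'_V,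
        ← Function.iterate_succ_apply (⇑dx), Function.iterate_succ_apply', sub_self]
    · show (⁅D, D'⁆ : Derivation ℝ A A) E = 0
      have h1 := key_RP
      simp only [Derivation.commutator_apply, D_E, D'_E, Derivation.leibniz, smul_eq_mul,
        map_add, D_V, D_U, D'_V, D'_U, Function.iterate_one, Function.iterate_zero, id_eq] at h1 ⊢
      linear_combination E * h1
  have := congrArg (fun d : Derivation ℝ A A => d a) h
  simpa [Derivation.commutator_apply, sub_eq_zero] using this

end TodaJets
end
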